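/- arXiv:1108.1949 — 2 statements merged into one kernel-verified Lean document; each statement's English description precedes it below -/
import Mathlib

section
/- For f(x) = log(α(S(φ(x)))/r) on ℝ² \ {0}, where r = |x|, φ = arccos((r²−1)/(r²+1)), and S solves S'(φ)sin(φ) = α(S(φ)), the Hessian of f satisfies tr(D²f) = −(α(S(φ))²/r²)·K and det(D²f) = −A² − AB, where A = (α'(S(φ))+1)/r², B = −(α(S(φ))²/r²)·K, and K is the Gauss curvature of the surface of revolution at the corresponding point. -/
/- STATEMENT 7: For f(x) = log(α(S(φ(x)))/r) on ℝ² \ {0}, with r = |x|,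
φ = arccos((r²−1)/(r²+1)), and S solving S'(φ) sin φ = α(S(φ)), the Hessian of f
satisfies tr(D²f) = B and det(D²f) = −A² − AB, where A = (α'(S(φ))+1)/r²,
B = −(α(S(φ))²/r²)·K, and K = −α''/α is the Gauss curvature of the surface of
revolution (metric ds² + α(s)²dθ²) at the corresponding point. -/

noncomputable def pd (i : Fin 2) (g : EuclideanSpace ℝ (Fin 2) → ℝ)
    (x : EuclideanSpace ℝ (Fin 2)) : ℝ :=
  fderiv ℝ g x (EuclideanSpace.single i 1)

noncomputable def hess (f : EuclideanSpace ℝ (Fin 2) → ℝ)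
    (x : EuclideanSpace ℝ (Fin 2)) (i j : Fin 2) : ℝ :=
  pd i (fun y => pd j f y) x


lemma aux_phi (t : ℝ) (ht : 0 < t) :
    HasDerivAt (fun t : ℝ => Real.arccos ((t-1)/(t+1))) (-(1/(Real.sqrt t * (t+1)))) t ∧
    Real.sin (Real.arccos ((t-1)/(t+1))) = 2*Real.sqrt t/(t+1) ∧
    Real.arccos ((t-1)/(t+1)) ∈ Set.Ioo 0 Real.pi := by
  have ht1 : (0:ℝ) < t + 1 := by linarith
  have hclt : (t-1)/(t+1) < 1 := by rw [div_lt_one ht1]; linarith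
  have hcgt : -1 < (t-1)/(t+1) := by rw [lt_div_iff₀ ht1]; linarith
  have hs : Real.sqrt t ^ 2 = t := Real.sq_sqrt ht.le
  have hsp : 0 < Real.sqrt t := Real.sqrt_pos.2 ht
  have hsq : 1 - ((t-1)/(t+1))^2 = (2*Real.sqrt t/(t+1))^2 := by
    field_simp
    nlinarith [hs]
  have hsin : Real.sin (Real.arccos ((t-1)/(t+1))) = 2*Real.sqrt t/(t+1) := by
    rw [Real.sin_arccos, hsq, Real.sqrt_sq (by positivity)]
  have hc : HasDerivAt (fun t : ℝ => (t-1)/(t+1)) (2/(t+1)^2) t := by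
    have := ((hasDerivAt_id t).sub_const 1).div ((hasDerivAt_id t).add_const 1) (ne_of_gt ht1)
    refine this.congr_deriv ?_
    simp only [id]
    ring
  have harc : HasDerivAt Real.arccos (-(1 / Real.sqrt (1 - ((t-1)/(t+1)) ^ 2))) ((t-1)/(t+1)) :=
    Real.hasDerivAt_arccos (ne_of_gt hcgt) (ne_of_lt hclt)
  have hΦ := harc.comp t hc
  refine ⟨?_, hsin, Real.arccos_pos.2 hclt, by
    have : -(Real.pi/2) < Real.arcsin ((t-1)/(t+1)) := Real.neg_pi_div_two_lt_arcsin.2 hcgt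
    rw [Real.arccos]; linarith⟩
  refine hΦ.congr_deriv ?_
  rw [hsq, Real.sqrt_sq (by positivity)]
  field_simp

lemma aux_u (α S : ℝ → ℝ) (hS : ContDiff ℝ (⊤ : ℕ∞) S)
    (hODE : ∀ φ ∈ Set.Ioo 0 Real.pi, deriv S φ * Real.sin φ = α (S φ))
    (t : ℝ) (ht : 0 < t) :
    HasDerivAt (fun t : ℝ => S (Real.arccos ((t-1)/(t+1))))
      (-(α (S (Real.arccos ((t-1)/(t+1)))) / (2*t))) t := by
  obtain ⟨hΦ, hsin, hmem⟩ := aux_phi t ht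
  have hsinpos : 0 < Real.sin (Real.arccos ((t-1)/(t+1))) :=
    Real.sin_pos_of_pos_of_lt_pi hmem.1 hmem.2
  have hSd : HasDerivAt S (deriv S (Real.arccos ((t-1)/(t+1)))) (Real.arccos ((t-1)/(t+1))) :=
    (hS.differentiable (by simp) _).hasDerivAt
  have hu := hSd.comp t hΦ
  have hODE' := hODE _ hmem
  have hs : Real.sqrt t * Real.sqrt t = t := Real.mul_self_sqrt ht.le
  have hsp : 0 < Real.sqrt t := Real.sqrt_pos.2 ht
  have ht1 : (0:ℝ) < t + 1 := by linarith
  have hderS : deriv S (Real.arccos ((t-1)/(t+1)))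
      = α (S (Real.arccos ((t-1)/(t+1)))) * (t+1) / (2*Real.sqrt t) := by
    rw [hsin] at hODE'
    field_simp at hODE' ⊢
    linarith [hODE']
  refine hu.congr_deriv ?_
  rw [hderS]
  set r := Real.sqrt t with hr
  rw [← hs]
  have hb : r*r + 1 ≠ 0 := by nlinarith
  field_simp

lemma aux_h (α S : ℝ → ℝ) (hα : ContDiff ℝ (⊤ : ℕ∞) α) (hS : ContDiff ℝ (⊤ : ℕ∞) S)
    (hODE : ∀ φ ∈ Set.Ioo 0 Real.pi, deriv S φ * Real.sin φ = α (S φ))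
    (t : ℝ) (ht : 0 < t) (hw : 0 < α (S (Real.arccos ((t-1)/(t+1))))) :
    HasDerivAt (fun t : ℝ => Real.log (α (S (Real.arccos ((t-1)/(t+1)))) / Real.sqrt t))
      (-((deriv α (S (Real.arccos ((t-1)/(t+1)))) + 1) / (2*t))) t := by
  have hu := aux_u α S hS hODE t ht
  have hαd : HasDerivAt α (deriv α (S (Real.arccos ((t-1)/(t+1))))) (S (Real.arccos ((t-1)/(t+1)))) :=
    (hα.differentiable (by simp) _).hasDerivAt
  have hwd := hαd.comp t hu
  have hsp : 0 < Real.sqrt t := Real.sqrt_pos.2 ht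
  have hs : Real.sqrt t * Real.sqrt t = t := Real.mul_self_sqrt ht.le
  have hsqd : HasDerivAt Real.sqrt (1/(2*Real.sqrt t)) t := Real.hasDerivAt_sqrt (ne_of_gt ht)
  have hg := hwd.div hsqd (ne_of_gt hsp)
  have hgx : α (S (Real.arccos ((t-1)/(t+1)))) / Real.sqrt t ≠ 0 := by positivity
  have hlog := hg.log hgx
  refine hlog.congr_deriv ?_
  simp only [Function.comp_apply, Pi.div_apply]
  set w := α (S (Real.arccos ((t-1)/(t+1))))
  set a := deriv α (S (Real.arccos ((t-1)/(t+1))))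
  set r := Real.sqrt t with hr
  rw [← hs]
  have hw0 : w ≠ 0 := ne_of_gt hw
  have hr0 : r ≠ 0 := ne_of_gt hsp
  field_simp
  ring

lemma aux_H1 (α S : ℝ → ℝ) (hα : ContDiff ℝ (⊤ : ℕ∞) α) (hS : ContDiff ℝ (⊤ : ℕ∞) S)
    (hODE : ∀ φ ∈ Set.Ioo 0 Real.pi, deriv S φ * Real.sin φ = α (S φ))
    (t : ℝ) (ht : 0 < t) :
    HasDerivAt (fun t : ℝ => -((deriv α (S (Real.arccos ((t-1)/(t+1)))) + 1) / (2*t)))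
      (deriv (deriv α) (S (Real.arccos ((t-1)/(t+1)))) * α (S (Real.arccos ((t-1)/(t+1)))) / (4*t^2)
        + (deriv α (S (Real.arccos ((t-1)/(t+1)))) + 1) / (2*t^2)) t := by
  have hu := aux_u α S hS hODE t ht
  have hα' : ContDiff ℝ ((⊤:ℕ∞) : WithTop ℕ∞) (deriv α) := by
    have h0 : ContDiff ℝ ((⊤:ℕ∞) : WithTop ℕ∞) α := hα.of_le (by simp)
    have h := ContDiff.iterate_deriv 1 h0
    rwa [Function.iterate_one] at h
  have hαd : HasDerivAt (deriv α) (deriv (deriv α) (S (Real.arccos ((t-1)/(t+1)))))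
      (S (Real.arccos ((t-1)/(t+1)))) :=
    (hα'.differentiable (by simp) _).hasDerivAt
  have hnum := (hαd.comp t hu).add_const 1
  have hden : HasDerivAt (fun t : ℝ => 2*t) 2 t := by
    have := (hasDerivAt_id t).const_mul (c := (2:ℝ))
    simpa using this
  have := (hnum.div hden (by positivity)).neg
  refine this.congr_deriv ?_
  simp only [Function.comp_apply]
  field_simp
  ring

lemma aux_norm (y : EuclideanSpace ℝ (Fin 2)) : ‖y‖^2 = y 0 * y 0 + y 1 * y 1 := by
  rw [EuclideanSpace.norm_eq, Real.sq_sqrt (by positivity)]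
  simp [Fin.sum_univ_two, Real.norm_eq_abs, sq_abs, sq]

lemma aux_q (y : EuclideanSpace ℝ (Fin 2)) :
    HasFDerivAt (fun z : EuclideanSpace ℝ (Fin 2) => z 0 * z 0 + z 1 * z 1)
      ((2 * y 0) • (EuclideanSpace.proj (𝕜 := ℝ) (0 : Fin 2))
        + (2 * y 1) • (EuclideanSpace.proj (𝕜 := ℝ) (1 : Fin 2))) y := by
  have h0 : HasFDerivAt (fun z : EuclideanSpace ℝ (Fin 2) => z 0)
      (EuclideanSpace.proj (𝕜 := ℝ) (0 : Fin 2)) y :=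
    (EuclideanSpace.proj (𝕜 := ℝ) (0 : Fin 2)).hasFDerivAt
  have h1 : HasFDerivAt (fun z : EuclideanSpace ℝ (Fin 2) => z 1)
      (EuclideanSpace.proj (𝕜 := ℝ) (1 : Fin 2)) y :=
    (EuclideanSpace.proj (𝕜 := ℝ) (1 : Fin 2)).hasFDerivAt
  have := (h0.fun_mul h0).fun_add (h1.fun_mul h1)
  refine this.congr_fderiv ?_
  ext v
  simp [ContinuousLinearMap.add_apply, smul_eq_mul]
  ring

theorem stmt7 (α S : ℝ → ℝ) (hα : ContDiff ℝ (⊤ : ℕ∞) α) (hS : ContDiff ℝ (⊤ : ℕ∞) S)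
    (hODE : ∀ φ ∈ Set.Ioo 0 Real.pi, deriv S φ * Real.sin φ = α (S φ))
    (f : EuclideanSpace ℝ (Fin 2) → ℝ)
    (hf : ∀ y : EuclideanSpace ℝ (Fin 2), y ≠ 0 →
      f y = Real.log (α (S (Real.arccos ((‖y‖ ^ 2 - 1) / (‖y‖ ^ 2 + 1)))) / ‖y‖))
    (x : EuclideanSpace ℝ (Fin 2)) (hx : x ≠ 0)
    (hpos : 0 < α (S (Real.arccos ((‖x‖ ^ 2 - 1) / (‖x‖ ^ 2 + 1))))) :
    let φ := Real.arccos ((‖x‖ ^ 2 - 1) / (‖x‖ ^ 2 + 1))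
    let K := -(deriv (deriv α) (S φ)) / α (S φ)
    let A := (deriv α (S φ) + 1) / ‖x‖ ^ 2
    let B := -((α (S φ)) ^ 2 / ‖x‖ ^ 2) * K
    hess f x 0 0 + hess f x 1 1 = B ∧
    hess f x 0 0 * hess f x 1 1 - hess f x 0 1 * hess f x 1 0 = -A ^ 2 - A * B := by
  intro φ K A B
  have hxn : 0 < ‖x‖ := norm_pos_iff.2 hx
  set q : EuclideanSpace ℝ (Fin 2) → ℝ := fun z => z 0 * z 0 + z 1 * z 1 with hqdef
  have hq : ∀ z : EuclideanSpace ℝ (Fin 2), q z = ‖z‖^2 := fun z => (aux_norm z).symm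
  have ht0 : 0 < q x := by rw [hq]; positivity
  have hwx : 0 < α (S (Real.arccos ((q x - 1)/(q x + 1)))) := by rw [hq]; exact hpos
  -- continuity
  have hqc : Continuous q := by
    fun_prop
  have hwc : ContinuousAt
      (fun y : EuclideanSpace ℝ (Fin 2) => α (S (Real.arccos ((q y - 1)/(q y + 1))))) x := by
    have hdiv : ContinuousAt (fun y : EuclideanSpace ℝ (Fin 2) => (q y - 1)/(q y + 1)) x :=
      ((hqc.sub continuous_const).continuousAt).div
        ((hqc.add continuous_const).continuousAt) (by positivity)
    exact ((hα.continuous.comp (hS.continuous.comp Real.continuous_arccos)).continuousAt).comp hdiv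
  have hev0 : ∀ᶠ y in nhds x, y ≠ 0 :=
    (isOpen_compl_singleton : IsOpen {(0:EuclideanSpace ℝ (Fin 2))}ᶜ).eventually_mem hx
  have hev1 : ∀ᶠ y in nhds x, 0 < q y :=
    hqc.continuousAt.eventually_mem (Ioi_mem_nhds ht0)
  have hev2 : ∀ᶠ y in nhds x, 0 < α (S (Real.arccos ((q y - 1)/(q y + 1)))) :=
    hwc.eventually_mem (Ioi_mem_nhds hwx)
  -- first derivative formula
  have hpdj : ∀ j : Fin 2, (fun y => pd j f y) =ᶠ[nhds x]
      fun y => -((deriv α (S (Real.arccos ((q y - 1) / (q y + 1)))) + 1) / (2 * q y)) * (2 * y j) := by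
    intro j
    filter_upwards [hev0, hev1, hev2] with y hy0 hy1 hy2
    have hlog := (aux_h α S hα hS hODE (q y) hy1 hy2).comp_hasFDerivAt y (aux_q y)
    have heq : f =ᶠ[nhds y]
        ((fun t : ℝ => Real.log (α (S (Real.arccos ((t-1)/(t+1)))) / Real.sqrt t)) ∘ q) := by
      filter_upwards [(isOpen_compl_singleton : IsOpen {(0:EuclideanSpace ℝ (Fin 2))}ᶜ).eventually_mem hy0]
        with z hz
      rw [hf z hz]
      simp only [Function.comp_apply]
      rw [hq z, Real.sqrt_sq (norm_nonneg z)]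
    have hfd := hlog.congr_of_eventuallyEq heq
    rw [show pd j f y = fderiv ℝ f y (EuclideanSpace.single j 1) from rfl, hfd.fderiv]
    fin_cases j <;>
      simp [EuclideanSpace.single_apply, smul_eq_mul] <;> ring
  -- second derivative
  have hH1d := aux_H1 α S hα hS hODE (q x) ht0
  have hcomp' : HasFDerivAt
      (fun y : EuclideanSpace ℝ (Fin 2) =>
        -((deriv α (S (Real.arccos ((q y - 1) / (q y + 1)))) + 1) / (2 * q y)))
      ((deriv (deriv α) (S (Real.arccos ((q x - 1)/(q x + 1)))) * α (S (Real.arccos ((q x - 1)/(q x + 1)))) / (4*(q x)^2)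
        + (deriv α (S (Real.arccos ((q x - 1)/(q x + 1)))) + 1) / (2*(q x)^2)) •
        ((2 * x 0) • (EuclideanSpace.proj (𝕜 := ℝ) (0 : Fin 2))
          + (2 * x 1) • (EuclideanSpace.proj (𝕜 := ℝ) (1 : Fin 2)))) x :=
    hH1d.comp_hasFDerivAt x (aux_q x)
  set a1 := deriv α (S (Real.arccos ((q x - 1)/(q x + 1)))) with ha1
  set a2 := deriv (deriv α) (S (Real.arccos ((q x - 1)/(q x + 1)))) with ha2
  set w := α (S (Real.arccos ((q x - 1)/(q x + 1)))) with hw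
  set H2v : ℝ := a2 * w / (4*(q x)^2) + (a1 + 1) / (2*(q x)^2) with hH2v
  have hessEq : ∀ i j : Fin 2, hess f x i j
      = -((a1 + 1)/(2 * q x)) * (2 * (if i = j then (1:ℝ) else 0))
        + (2 * x j) * (H2v * (2 * x i)) := by
    intro i j
    have hrw : hess f x i j = fderiv ℝ (fun y => pd j f y) x (EuclideanSpace.single i 1) := rfl
    rw [hrw, Filter.EventuallyEq.fderiv_eq (hpdj j)]
    have hlin : HasFDerivAt (fun y : EuclideanSpace ℝ (Fin 2) => 2 * y j)
        ((2:ℝ) • (EuclideanSpace.proj (𝕜 := ℝ) j)) x :=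
      HasFDerivAt.const_mul ((EuclideanSpace.proj (𝕜 := ℝ) j).hasFDerivAt) 2
    have hmul := hcomp'.fun_mul hlin
    rw [hmul.fderiv]
    fin_cases i <;> fin_cases j <;>
      simp [EuclideanSpace.single_apply, smul_eq_mul] <;> ring
  have hxx : x 0 * x 0 + x 1 * x 1 = q x := rfl
  have h00 := hessEq 0 0
  have h01 := hessEq 0 1
  have h10 := hessEq 1 0
  have h11 := hessEq 1 1
  rw [if_pos rfl] at h00
  rw [if_pos rfl] at h11
  rw [if_neg (by decide)] at h01
  rw [if_neg (by decide)] at h10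
  have hφq : φ = Real.arccos ((q x - 1)/(q x + 1)) := by rw [hq]
  have hBv : B = -(w^2 / q x) * (-a2 / w) := by
    rw [show B = -((α (S φ))^2 / ‖x‖^2) * (-(deriv (deriv α) (S φ)) / α (S φ)) from rfl,
      hφq, ← hq, ← ha2, ← hw]
  have hAv : A = (a1 + 1) / q x := by
    rw [show A = (deriv α (S φ) + 1) / ‖x‖^2 from rfl, hφq, ← hq, ← ha1]
  have hq0 : q x ≠ 0 := ne_of_gt ht0
  have hw0 : w ≠ 0 := ne_of_gt hwx
  clear_value H2v
  clear_value w
  clear_value a2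
  clear_value a1
  obtain ⟨t0, ht0q⟩ : ∃ t0, q x = t0 := ⟨q x, rfl⟩
  rw [ht0q] at h00 h01 h10 h11 hxx hBv hAv hH2v hq0
  clear hcomp' hH1d hpdj hessEq hev0 hev1 hev2 hwc hqc hf hODE hα hS hφq hq ht0 hwx hxn hpos hx ht0q hqdef ha1 ha2 hw
  constructor
  · have e1 : hess f x 0 0 + hess f x 1 1
        = 4 * (-((a1 + 1)/(2 * t0))) + 4 * H2v * t0 := by
      rw [h00, h11]; linear_combination (4 * H2v) * hxx
    rw [e1, hBv, hH2v]
    field_simp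
    ring
  · have e2 : hess f x 0 0 * hess f x 1 1 - hess f x 0 1 * hess f x 1 0
        = 4 * (-((a1 + 1)/(2 * t0)))^2
          + 8 * (-((a1 + 1)/(2 * t0))) * H2v * t0 := by
      rw [h00, h01, h10, h11]
      linear_combination (8 * (-((a1 + 1)/(2 * t0))) * H2v) * hxx
    rw [e2, hAv, hBv, hH2v]
    field_simp
    ring
end

section
/- Let (M,g) be a compact Riemannian 2-manifold with boundary and ρ : M → ℝ a smooth function with ρ ≥ 0 in M, ρ = 1 on ∂M, satisfying Δ_M ρ = ρ³ − ρ in M. Then ρ ≡ 1. -/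
abbrev E2 := EuclideanSpace ℝ (Fin 2)

lemma contDiff_pd {u : E2 → ℝ} (hu : ContDiff ℝ (⊤ : ℕ∞) u) (i : Fin 2) :
    ContDiff ℝ (⊤ : ℕ∞) (pd i u) :=
  (hu.fderiv_right (by simp)).clm_apply contDiff_const

lemma hasDerivAt_line {u : E2 → ℝ} (hu : ContDiff ℝ (⊤ : ℕ∞) u)
    (y v : E2) (t : ℝ) :
    HasDerivAt (fun t : ℝ => u (y + t • v)) (fderiv ℝ u (y + t • v) v) t := by
  have hL : HasDerivAt (fun t : ℝ => y + t • v) v t := by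
    simpa using ((hasDerivAt_id t).smul_const v).const_add y
  exact (hu.differentiable (by simp) (y + t • v)).hasFDerivAt.comp_hasDerivAt t hL

lemma second_test {g g' g'' : ℝ → ℝ}
    (h1 : ∀ t, HasDerivAt g (g' t) t) (h2 : ∀ t, HasDerivAt g' (g'' t) t)
    (hc : Continuous g'') (hmax : IsLocalMax g 0) : g'' 0 ≤ 0 := by
  by_contra hpos
  push_neg at hpos
  have hev : ∀ᶠ t in nhds (0:ℝ), 0 < g'' t :=
    hc.continuousAt.eventually (p := fun z => 0 < z) (eventually_gt_nhds hpos)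
  obtain ⟨δ₁, hδ₁, hb1⟩ := Metric.eventually_nhds_iff.mp hev
  obtain ⟨δ₂, hδ₂, hb2⟩ := Metric.eventually_nhds_iff.mp hmax
  set ε := min δ₁ δ₂ / 2 with hε
  have hεpos : 0 < ε := by positivity
  have hεδ₁ : ε < δ₁ := by
    have : min δ₁ δ₂ ≤ δ₁ := min_le_left _ _
    linarith
  have hεδ₂ : ε < δ₂ := by
    have : min δ₁ δ₂ ≤ δ₂ := min_le_right _ _
    linarith
  have hg'0 : g' 0 = 0 := by
    have := hmax.deriv_eq_zero
    rwa [(h1 0).deriv] at this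
  have mono1 : StrictMonoOn g' (Set.Icc 0 ε) := by
    apply strictMonoOn_of_deriv_pos (convex_Icc 0 ε)
      (fun t _ => ((h2 t).continuousAt).continuousWithinAt)
    intro t ht
    rw [interior_Icc] at ht
    rw [(h2 t).deriv]
    apply hb1
    rw [Real.dist_eq, sub_zero, abs_of_pos ht.1]
    exact ht.2.trans hεδ₁
  have mono2 : StrictMonoOn g (Set.Icc 0 ε) := by
    apply strictMonoOn_of_deriv_pos (convex_Icc 0 ε)
      (fun t _ => ((h1 t).continuousAt).continuousWithinAt)
    intro t ht
    rw [interior_Icc] at ht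
    rw [(h1 t).deriv]
    have := mono1 (Set.left_mem_Icc.mpr hεpos.le) ⟨ht.1.le, ht.2.le⟩ ht.1
    rwa [hg'0] at this
  have h3 : g 0 < g ε :=
    mono2 (Set.left_mem_Icc.mpr hεpos.le) (Set.right_mem_Icc.mpr hεpos.le) hεpos
  have h4 : g ε ≤ g 0 := by
    apply hb2
    rw [Real.dist_eq, sub_zero, abs_of_pos hεpos]
    exact hεδ₂
  linarith

lemma pd_pd_nonpos {u : E2 → ℝ} (hu : ContDiff ℝ (⊤ : ℕ∞) u) {y : E2}
    (hmax : IsLocalMax u y) (i : Fin 2) : pd i (pd i u) y ≤ 0 := by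
  set v := EuclideanSpace.single i (1:ℝ) with hv
  have h1 : ∀ t : ℝ, HasDerivAt (fun t : ℝ => u (y + t • v))
      ((fun t : ℝ => pd i u (y + t • v)) t) t := fun t => hasDerivAt_line hu y v t
  have h2 : ∀ t : ℝ, HasDerivAt (fun t : ℝ => pd i u (y + t • v))
      ((fun t : ℝ => pd i (pd i u) (y + t • v)) t) t :=
    fun t => hasDerivAt_line (contDiff_pd hu i) y v t
  have hcL : Continuous (fun t : ℝ => y + t • v) := by continuity
  have hc : Continuous (fun t : ℝ => pd i (pd i u) (y + t • v)) :=
    (contDiff_pd (contDiff_pd hu i) i).continuous.comp hcL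
  have hm : IsLocalMax (fun t : ℝ => u (y + t • v)) 0 := by
    have ht : Filter.Tendsto (fun t : ℝ => y + t • v) (nhds 0) (nhds y) := by
      simpa using hcL.tendsto 0
    have := ht.eventually hmax
    simpa [IsLocalMax, IsMaxFilter] using this
  have := second_test h1 h2 hc hm
  simpa using this

lemma pd_eval {u : E2 → ℝ} {x : E2} {L : E2 →L[ℝ] ℝ} (h : HasFDerivAt u L x)
    (i : Fin 2) : pd i u x = L (EuclideanSpace.single i 1) := by
  rw [pd, h.fderiv]

noncomputable def φb : E2 → ℝ := fun x => Real.exp (x 0)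

lemma hasFDerivAt_φb (x : E2) :
    HasFDerivAt φb (Real.exp (x 0) • (EuclideanSpace.proj (0 : Fin 2) : E2 →L[ℝ] ℝ)) x := by
  have h1 : HasFDerivAt (fun x : E2 => x 0)
      (EuclideanSpace.proj (0 : Fin 2) : E2 →L[ℝ] ℝ) x := by
    have := (EuclideanSpace.proj (0 : Fin 2) : E2 →L[ℝ] ℝ).hasFDerivAt (x := x)
    convert this using 2
    rfl
  exact (Real.hasDerivAt_exp (x 0)).comp_hasFDerivAt x h1

lemma contDiff_φb : ContDiff ℝ (⊤ : ℕ∞) φb :=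
  Real.contDiff_exp.comp (by exact (EuclideanSpace.proj (0 : Fin 2) : E2 →L[ℝ] ℝ).contDiff)

lemma φb_pos (x : E2) : 0 < φb x := Real.exp_pos _

lemma pd_φb_0 : pd 0 φb = φb := by
  funext x
  rw [pd_eval (hasFDerivAt_φb x)]
  simp [φb]

lemma pd_φb_1 : pd 1 φb = fun _ => (0:ℝ) := by
  funext x
  rw [pd_eval (hasFDerivAt_φb x)]
  simp

lemma pd_pd_φb_0 (x : E2) : pd 0 (pd 0 φb) x = φb x := by
  rw [pd_φb_0, pd_φb_0]

lemma pd_pd_φb_1 (x : E2) : pd 1 (pd 1 φb) x = 0 := by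
  rw [pd_φb_1, pd, fderiv_fun_const]
  simp

lemma pd_add_smul {u g : E2 → ℝ} (hu : Differentiable ℝ u) (hg : Differentiable ℝ g)
    (ε : ℝ) (i : Fin 2) (x : E2) :
    pd i (fun x => u x + ε * g x) x = pd i u x + ε * pd i g x := by
  have h : HasFDerivAt (fun x => u x + ε * g x)
      (fderiv ℝ u x + ε • fderiv ℝ g x) x :=
    ((hu x).hasFDerivAt).add (((hg x).hasFDerivAt).const_mul ε)
  rw [pd_eval h]
  simp [pd]

lemma maxprin (Ω : Set E2) (hΩo : IsOpen Ω) (hΩc : IsCompact (closure Ω))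
    (c u : E2 → ℝ) (hu : ContDiff ℝ (⊤ : ℕ∞) u)
    (hc : ∀ x ∈ Ω, 0 ≤ c x)
    (heq : ∀ x ∈ Ω, pd 0 (pd 0 u) x + pd 1 (pd 1 u) x = c x * u x)
    (hbc : ∀ x ∈ frontier Ω, u x = 0) :
    ∀ x ∈ closure Ω, u x ≤ 0 := by
  intro x₀ hx₀
  by_contra hM
  push_neg at hM
  have hne : (closure Ω).Nonempty := ⟨x₀, hx₀⟩
  obtain ⟨xS, hxS, hS⟩ := hΩc.exists_isMaxOn hne contDiff_φb.continuous.continuousOn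
  set S := φb xS with hSdef
  have hSpos : 0 < S := φb_pos xS
  set ε := u x₀ / (2 * S) with hεdef
  have hεpos : 0 < ε := by positivity
  set w : E2 → ℝ := fun x => u x + ε * φb x with hw
  have hwc : ContDiff ℝ (⊤ : ℕ∞) w := hu.add (contDiff_const.mul contDiff_φb)
  obtain ⟨y, hy, hmaxy⟩ := hΩc.exists_isMaxOn hne hwc.continuous.continuousOn
  have hεS : ε * S = u x₀ / 2 := by
    rw [hεdef]; field_simp
  have hwx₀ : u x₀ < w x₀ := by
    have h3 := φb_pos x₀
    simp only [hw]
    nlinarith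
  have hyΩ : y ∈ Ω := by
    by_contra hyf
    have hfr : y ∈ frontier Ω := by
      rw [hΩo.frontier_eq]; exact ⟨hy, hyf⟩
    have hwy : w y = ε * φb y := by simp [hw, hbc y hfr]
    have h2 : φb y ≤ S := hS hy
    have h1 : w x₀ ≤ w y := hmaxy hx₀
    nlinarith
  have hloc : IsLocalMax w y :=
    Filter.eventually_of_mem (hΩo.mem_nhds hyΩ) (fun z hz => hmaxy (subset_closure hz))
  have hΔ0 := pd_pd_nonpos hwc hloc 0
  have hΔ1 := pd_pd_nonpos hwc hloc 1
  have hdu : Differentiable ℝ u := hu.differentiable (by simp)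
  have hdφ : Differentiable ℝ φb := contDiff_φb.differentiable (by simp)
  have hpdw0 : pd 0 w = fun x => pd 0 u x + ε * pd 0 φb x :=
    funext (fun x => pd_add_smul hdu hdφ ε 0 x)
  have hpdw1 : pd 1 w = fun x => pd 1 u x + ε * pd 1 φb x :=
    funext (fun x => pd_add_smul hdu hdφ ε 1 x)
  have e0 : pd 0 (pd 0 w) y = pd 0 (pd 0 u) y + ε * φb y := by
    rw [hpdw0, pd_add_smul ((contDiff_pd hu 0).differentiable (by simp))
      ((contDiff_pd contDiff_φb 0).differentiable (by simp)), pd_pd_φb_0]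
  have e1 : pd 1 (pd 1 w) y = pd 1 (pd 1 u) y := by
    rw [hpdw1, pd_add_smul ((contDiff_pd hu 1).differentiable (by simp))
      ((contDiff_pd contDiff_φb 1).differentiable (by simp)), pd_pd_φb_1]
    ring
  have huy : u x₀ / 2 ≤ u y := by
    have h1 : w x₀ ≤ w y := hmaxy hx₀
    have h2 : φb y ≤ S := hS hy
    have h3 : 0 < φb x₀ := φb_pos x₀
    simp only [hw] at h1
    nlinarith
  have hcy : 0 ≤ c y * u y := mul_nonneg (hc y hyΩ) (by linarith)
  have heqy := heq y hyΩ
  have hφy := φb_pos y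
  rw [e0] at hΔ0
  rw [e1] at hΔ1
  nlinarith

theorem stmt11 (Ω : Set (EuclideanSpace ℝ (Fin 2))) (hΩo : IsOpen Ω)
    (hΩc : IsCompact (closure Ω))
    (f : EuclideanSpace ℝ (Fin 2) → ℝ) (hf : ContDiff ℝ (⊤ : ℕ∞) f)
    (ρ : EuclideanSpace ℝ (Fin 2) → ℝ) (hρ : ContDiff ℝ (⊤ : ℕ∞) ρ)
    (hρpos : ∀ x ∈ closure Ω, 0 ≤ ρ x) (hρbc : ∀ x ∈ frontier Ω, ρ x = 1)
    (hpde : ∀ x ∈ Ω,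
      pd 0 (pd 0 ρ) x + pd 1 (pd 1 ρ) x = Real.exp (2 * f x) * (ρ x ^ 3 - ρ x)) :
    ∀ x ∈ closure Ω, ρ x = 1 := by
  intro x hx
  have hdρ : Differentiable ℝ ρ := hρ.differentiable (by simp)
  set c : E2 → ℝ := fun z => Real.exp (2 * f z) * (ρ z * (ρ z + 1)) with hcdef
  have hc0 : ∀ z ∈ Ω, 0 ≤ c z := by
    intro z hz
    have := hρpos z (subset_closure hz)
    have : (0:ℝ) ≤ ρ z * (ρ z + 1) := by nlinarith
    positivity
  -- direction 1 : u = ρ - 1 ≤ 0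
  set u : E2 → ℝ := fun z => ρ z - 1 with hudef
  have huc : ContDiff ℝ (⊤ : ℕ∞) u := hρ.sub contDiff_const
  have hpdu : ∀ i : Fin 2, pd i u = pd i ρ := by
    intro i; funext z
    have h : HasFDerivAt u (fderiv ℝ ρ z) z := ((hdρ z).hasFDerivAt).sub_const 1
    rw [pd_eval h, pd]
  have heq : ∀ z ∈ Ω, pd 0 (pd 0 u) z + pd 1 (pd 1 u) z = c z * u z := by
    intro z hz
    rw [hpdu 0, hpdu 1, hpde z hz]
    simp only [hudef, hcdef]
    ring
  have hbc : ∀ z ∈ frontier Ω, u z = 0 := by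
    intro z hz; simp [hudef, hρbc z hz]
  have h1 := maxprin Ω hΩo hΩc c u huc hc0 heq hbc x hx
  -- direction 2 : u2 = 1 - ρ ≤ 0
  set u2 : E2 → ℝ := fun z => 1 - ρ z with hu2def
  have hu2c : ContDiff ℝ (⊤ : ℕ∞) u2 := contDiff_const.sub hρ
  have hpdu2 : ∀ i : Fin 2, pd i u2 = fun z => -(pd i ρ z) := by
    intro i; funext z
    have h : HasFDerivAt u2 (-(fderiv ℝ ρ z)) z := ((hdρ z).hasFDerivAt).const_sub 1
    rw [pd_eval h]
    simp [pd]
  have hpdρd : ∀ i : Fin 2, Differentiable ℝ (pd i ρ) :=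
    fun i => (contDiff_pd hρ i).differentiable (by simp)
  have hpdu2' : ∀ (i : Fin 2) (z : E2), pd i (pd i u2) z = -(pd i (pd i ρ) z) := by
    intro i z
    rw [hpdu2 i]
    have h : HasFDerivAt (fun z => -(pd i ρ z)) (-(fderiv ℝ (pd i ρ) z)) z :=
      ((hpdρd i z).hasFDerivAt).neg
    rw [pd_eval h]
    simp [pd]
  have heq2 : ∀ z ∈ Ω, pd 0 (pd 0 u2) z + pd 1 (pd 1 u2) z = c z * u2 z := by
    intro z hz
    rw [hpdu2' 0, hpdu2' 1]
    have := hpde z hz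
    simp only [hu2def, hcdef]
    nlinarith [this]
  have hbc2 : ∀ z ∈ frontier Ω, u2 z = 0 := by
    intro z hz; simp [hu2def, hρbc z hz]
  have h2 := maxprin Ω hΩo hΩc c u2 hu2c hc0 heq2 hbc2 x hx
  simp only [hudef] at h1
  simp only [hu2def] at h2
  linarith
end
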